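/- Let constants σ₀ > 0, β₀, μ₀, c₀, λ₀, λ₁₀, λ₀₁, ρ ∈ (-1,1), x̄, ȳ, T be given, and let V⁽⁰⁾(t, w) be a smooth solution on (-∞, T] × (0, ∞) of ∂_t V⁽⁰⁾ - (1/2) λ₀² (∂_w V⁽⁰⁾)²/(∂_w² V⁽⁰⁾) = 0 with ∂_w V⁽⁰⁾ > 0 and ∂_w² V⁽⁰⁾ < 0, with risk tolerance R := -∂_w V⁽⁰⁾/∂_w² V⁽⁰⁾ and D_k := R^k ∂_w^k. Define A(t, x, y) := λ₁₀ [(x - x̄) + (1/2)(T - t)(μ₀ - σ₀²/2)] + λ₀₁ [(y - ȳ) + (1/2)(T - t) c₀] and B := λ₁₀ μ₀ + λ₀₁ ρβ₀λ₀. Then the function V⁽¹⁾(t, x, y, w) := (T - t) λ₀ A(t, x, y) D₁V⁽⁰⁾(t, w) + (1/2)(T - t)² λ₀ B D₁²V⁽⁰⁾(t, w) satisfies (∂_t + 𝒜₀ + ℬ₀) V⁽¹⁾ + [λ₀λ₁₀(x - x̄) + λ₀λ₀₁(y - ȳ)] D₁V⁽⁰⁾ = 0 with V⁽¹⁾(T,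 x, y, w) = 0, where 𝒜₀ := (1/2)σ₀² ∂_x² + ρσ₀β₀ ∂_x∂_y + (1/2)β₀² ∂_y² + (μ₀ - σ₀²/2) ∂_x + c₀ ∂_y and ℬ₀ := (1/2)λ₀² R² ∂_w² + λ₀² R ∂_w + ρβ₀λ₀ R ∂_w∂_y + μ₀ R ∂_w∂_x. -/

import Mathlib

/-!
Write `ℒ = ∂_t + ½λ₀²D₂ + λ₀²D₁`. The Merton equation for `V⁰` reads `ℒV⁰ = 0`, and
differentiating it in `w` shows that the risk tolerance solves the fast diffusion equation
`R_t + ½λ₀²R²R_ww = 0`. That equation is exactly what makes `ℒ` commute with `D₁`, so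
`ℒD₁ⁿV⁰ = 0` for every `n`.

`V¹` is affine in `(x - x̄, y - ȳ)` with coefficients of the form `c (T-t)ᵏ D₁ʲV⁰`. On such a
function `∂_t + 𝒜₀ + ℬ₀` acts on the coefficients through `ℒ`, which only sees the time factors,
plus the drift of `(x, y)` and the cross terms `R∂_w∂_x`, `R∂_w∂_y`. The derivative of `(T-t)`
cancels the source term; that of `(T-t)²` cancels the drift terms and, since `D₁(D₁V⁰) = D₁²V⁰`,
the cross terms, whose total coefficient is `(T-t)λ₀B`.
-/
noncomputable section

abbrev R4 := ℝ → ℝ → ℝ → ℝ → ℝ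

def d4T (F : R4) : R4 := fun t x y w => deriv (fun s => F s x y w) t
def d4X (F : R4) : R4 := fun t x y w => deriv (fun u => F t u y w) x
def d4Y (F : R4) : R4 := fun t x y w => deriv (fun u => F t x u w) y
def d4W (F : R4) : R4 := fun t x y w => deriv (fun u => F t x y u) w

def dT2 (f : ℝ → ℝ → ℝ) : ℝ → ℝ → ℝ := fun t w => deriv (fun s => f s w) t

def dW2 (f : ℝ → ℝ → ℝ) : ℝ → ℝ → ℝ := fun t w => deriv (fun v => f t v) w

open Function Set Filter Topology
open scoped ContDiff

section PartialDerivatives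

variable {U : Set (ℝ × ℝ)} {f g : ℝ → ℝ → ℝ} {t w : ℝ}

theorem hasDerivAt_slice_snd (hf : ContDiffOn ℝ ∞ (uncurry f) U) (hU : IsOpen U)
    (hp : (t, w) ∈ U) :
    HasDerivAt (fun v => f t v) (fderiv ℝ (uncurry f) (t, w) (0, 1)) w := by
  have hd : DifferentiableAt ℝ (uncurry f) (t, w) :=
    (hf.contDiffAt (hU.mem_nhds hp)).differentiableAt (by simp)
  exact hd.hasFDerivAt.comp_hasDerivAt w ((hasDerivAt_const w t).prodMk (hasDerivAt_id' w))

theorem hasDerivAt_slice_fst (hf : ContDiffOn ℝ ∞ (uncurry f) U) (hU : IsOpen U)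
    (hp : (t, w) ∈ U) :
    HasDerivAt (fun s => f s w) (fderiv ℝ (uncurry f) (t, w) (1, 0)) t := by
  have hd : DifferentiableAt ℝ (uncurry f) (t, w) :=
    (hf.contDiffAt (hU.mem_nhds hp)).differentiableAt (by simp)
  exact hd.hasFDerivAt.comp_hasDerivAt t ((hasDerivAt_id' t).prodMk (hasDerivAt_const t w))

theorem dW2_eq_fderiv (hf : ContDiffOn ℝ ∞ (uncurry f) U) (hU : IsOpen U) (hp : (t, w) ∈ U) :
    dW2 f t w = fderiv ℝ (uncurry f) (t, w) (0, 1) :=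
  (hasDerivAt_slice_snd hf hU hp).deriv

theorem dT2_eq_fderiv (hf : ContDiffOn ℝ ∞ (uncurry f) U) (hU : IsOpen U) (hp : (t, w) ∈ U) :
    dT2 f t w = fderiv ℝ (uncurry f) (t, w) (1, 0) :=
  (hasDerivAt_slice_fst hf hU hp).deriv

theorem hasDerivAt_dW2 (hf : ContDiffOn ℝ ∞ (uncurry f) U) (hU : IsOpen U) (hp : (t, w) ∈ U) :
    HasDerivAt (fun v => f t v) (dW2 f t w) w :=
  dW2_eq_fderiv hf hU hp ▸ hasDerivAt_slice_snd hf hU hp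

theorem hasDerivAt_dT2 (hf : ContDiffOn ℝ ∞ (uncurry f) U) (hU : IsOpen U) (hp : (t, w) ∈ U) :
    HasDerivAt (fun s => f s w) (dT2 f t w) t :=
  dT2_eq_fderiv hf hU hp ▸ hasDerivAt_slice_fst hf hU hp

theorem contDiffOn_fderiv_apply (hf : ContDiffOn ℝ ∞ (uncurry f) U) (hU : IsOpen U)
    (v : ℝ × ℝ) : ContDiffOn ℝ ∞ (fun p => fderiv ℝ (uncurry f) p v) U :=
  (hf.fderiv_of_isOpen hU (by simp)).clm_apply contDiffOn_const

theorem contDiffOn_dW2 (hf : ContDiffOn ℝ ∞ (uncurry f) U) (hU : IsOpen U) :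
    ContDiffOn ℝ ∞ (uncurry (dW2 f)) U :=
  (contDiffOn_fderiv_apply hf hU (0, 1)).congr fun _ hp => dW2_eq_fderiv hf hU hp

theorem contDiffOn_dT2 (hf : ContDiffOn ℝ ∞ (uncurry f) U) (hU : IsOpen U) :
    ContDiffOn ℝ ∞ (uncurry (dT2 f)) U :=
  (contDiffOn_fderiv_apply hf hU (1, 0)).congr fun _ hp => dT2_eq_fderiv hf hU hp

theorem dT2_dW2_comm (hf : ContDiffOn ℝ ∞ (uncurry f) U) (hU : IsOpen U) (hp : (t, w) ∈ U) :
    dT2 (dW2 f) t w = dW2 (dT2 f) t w := by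
  have hfp : ContDiffAt ℝ ∞ (uncurry f) (t, w) := hf.contDiffAt (hU.mem_nhds hp)
  have hd : DifferentiableAt ℝ (fderiv ℝ (uncurry f)) (t, w) :=
    (hfp.fderiv_right (m := 1) (WithTop.coe_le_coe.2 le_top)).differentiableAt one_ne_zero
  have hsecond : ∀ v v' : ℝ × ℝ, fderiv ℝ (fun p => fderiv ℝ (uncurry f) p v) (t, w) v'
      = fderiv ℝ (fderiv ℝ (uncurry f)) (t, w) v' v := fun v v' => by
    rw [(hd.hasFDerivAt.clm_apply (hasFDerivAt_const v _)).fderiv]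
    simp
  have hW : uncurry (dW2 f) =ᶠ[𝓝 (t, w)] fun p => fderiv ℝ (uncurry f) p (0, 1) :=
    eventually_of_mem (hU.mem_nhds hp) fun _ hq => dW2_eq_fderiv hf hU hq
  have hT : uncurry (dT2 f) =ᶠ[𝓝 (t, w)] fun p => fderiv ℝ (uncurry f) p (1, 0) :=
    eventually_of_mem (hU.mem_nhds hp) fun _ hq => dT2_eq_fderiv hf hU hq
  rw [dT2_eq_fderiv (contDiffOn_dW2 hf hU) hU hp, dW2_eq_fderiv (contDiffOn_dT2 hf hU) hU hp,
    hW.fderiv_eq, hT.fderiv_eq, hsecond, hsecond]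
  exact (hfp.isSymmSndFDerivAt (by
    rw [minSmoothness_of_isRCLikeNormedField]; exact WithTop.coe_le_coe.2 le_top)).eq _ _

theorem dW2_congr (hU : IsOpen U) (hfg : ∀ s u, (s, u) ∈ U → f s u = g s u)
    (hp : (t, w) ∈ U) :
    dW2 f t w = dW2 g t w := by
  have : (fun v => f t v) =ᶠ[𝓝 w] fun v => g t v :=
    (hU.preimage (continuous_const.prodMk continuous_id)).eventually_mem hp |>.mono
      fun v hv => hfg t v hv
  exact this.deriv_eq

theorem dT2_congr (hU : IsOpen U) (hfg : ∀ s u, (s, u) ∈ U → f s u = g s u)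
    (hp : (t, w) ∈ U) :
    dT2 f t w = dT2 g t w := by
  have : (fun s => f s w) =ᶠ[𝓝 t] fun s => g s w :=
    (hU.preimage (continuous_id.prodMk continuous_const)).eventually_mem hp |>.mono
      fun s hs => hfg s w hs
  exact this.deriv_eq

end PartialDerivatives

section MertonOperator

variable {U : Set (ℝ × ℝ)} {R f g V : ℝ → ℝ → ℝ} {φ : ℝ → ℝ} {lam φ' t w : ℝ}

def riskTolerance (V : ℝ → ℝ → ℝ) : ℝ → ℝ → ℝ := fun t w => -dW2 V t w / dW2 (dW2 V) t w

def D1 (R f : ℝ → ℝ → ℝ) : ℝ → ℝ → ℝ := fun t w => R t w * dW2 f t w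

/-- The operator `ℒ = ∂_t + ½λ²D₂ + λ²D₁`. -/
def mertonOp (lam : ℝ) (R f : ℝ → ℝ → ℝ) : ℝ → ℝ → ℝ := fun t w =>
  dT2 f t w + 1 / 2 * lam ^ 2 * R t w ^ 2 * dW2 (dW2 f) t w + lam ^ 2 * R t w * dW2 f t w

theorem mertonOp_riskTolerance_self (lam : ℝ) (V : ℝ → ℝ → ℝ) (t w : ℝ) :
    mertonOp lam (riskTolerance V) V t w
      = dT2 V t w - 1 / 2 * lam ^ 2 * dW2 V t w ^ 2 / dW2 (dW2 V) t w := by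
  unfold mertonOp riskTolerance
  rcases eq_or_ne (dW2 (dW2 V) t w) 0 with h | h
  · simp [h]
  · field_simp
    ring

theorem contDiffOn_riskTolerance (hV : ContDiffOn ℝ ∞ (uncurry V) U) (hU : IsOpen U)
    (hV2 : ∀ s u, (s, u) ∈ U → dW2 (dW2 V) s u ≠ 0) :
    ContDiffOn ℝ ∞ (uncurry (riskTolerance V)) U :=
  (contDiffOn_dW2 hV hU).neg.div (contDiffOn_dW2 (contDiffOn_dW2 hV hU) hU)
    fun q hq => hV2 q.1 q.2 hq

theorem contDiffOn_D1 (hR : ContDiffOn ℝ ∞ (uncurry R) U) (hf : ContDiffOn ℝ ∞ (uncurry f) U)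
    (hU : IsOpen U) : ContDiffOn ℝ ∞ (uncurry (D1 R f)) U :=
  hR.mul (contDiffOn_dW2 hf hU)

theorem mertonOp_D1 (hR : ContDiffOn ℝ ∞ (uncurry R) U) (hf : ContDiffOn ℝ ∞ (uncurry f) U)
    (hU : IsOpen U) (hp : (t, w) ∈ U) :
    mertonOp lam R (D1 R f) t w = R t w * dW2 (mertonOp lam R f) t w
      + dW2 f t w * (dT2 R t w + 1 / 2 * lam ^ 2 * R t w ^ 2 * dW2 (dW2 R) t w) := by
  have hR1 := contDiffOn_dW2 hR hU
  have hf1 := contDiffOn_dW2 hf hU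
  have hf2 := contDiffOn_dW2 hf1 hU
  have hDw : ∀ s u, (s, u) ∈ U →
      dW2 (D1 R f) s u = dW2 R s u * dW2 f s u + R s u * dW2 (dW2 f) s u :=
    fun s u hq => ((hasDerivAt_dW2 hR hU hq).mul (hasDerivAt_dW2 hf1 hU hq)).deriv
  have hDww : dW2 (dW2 (D1 R f)) t w = dW2 (dW2 R) t w * dW2 f t w
      + 2 * dW2 R t w * dW2 (dW2 f) t w + R t w * dW2 (dW2 (dW2 f)) t w := by
    rw [dW2_congr hU hDw hp]
    exact ((((hasDerivAt_dW2 hR1 hU hp).mul (hasDerivAt_dW2 hf1 hU hp)).add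
      ((hasDerivAt_dW2 hR hU hp).mul (hasDerivAt_dW2 hf2 hU hp))).congr_deriv (by ring)).deriv
  have hDt : dT2 (D1 R f) t w = dT2 R t w * dW2 f t w + R t w * dT2 (dW2 f) t w :=
    ((hasDerivAt_dT2 hR hU hp).mul (hasDerivAt_dT2 hf1 hU hp)).deriv
  have hLw : dW2 (mertonOp lam R f) t w = dW2 (dT2 f) t w
      + 1 / 2 * lam ^ 2 * (2 * R t w * dW2 R t w * dW2 (dW2 f) t w
        + R t w ^ 2 * dW2 (dW2 (dW2 f)) t w)
      + lam ^ 2 * (dW2 R t w * dW2 f t w + R t w * dW2 (dW2 f) t w) := by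
    have hR' := hasDerivAt_dW2 hR hU hp
    exact ((((hasDerivAt_dW2 (contDiffOn_dT2 hf hU) hU hp).add
      (((hR'.fun_pow 2).const_mul (1 / 2 * lam ^ 2)).mul (hasDerivAt_dW2 hf2 hU hp))).add
      ((hR'.const_mul (lam ^ 2)).mul (hasDerivAt_dW2 hf1 hU hp))).congr_deriv (by ring)).deriv
  rw [hLw]
  simp only [mertonOp]
  rw [hDt, hDww, hDw t w hp, dT2_dW2_comm hf hU hp]
  ring

theorem riskTolerance_pde (hV : ContDiffOn ℝ ∞ (uncurry V) U) (hU : IsOpen U)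
    (hV2 : ∀ s u, (s, u) ∈ U → dW2 (dW2 V) s u ≠ 0)
    (hLV : ∀ s u, (s, u) ∈ U → mertonOp lam (riskTolerance V) V s u = 0) (hp : (t, w) ∈ U) :
    dT2 (riskTolerance V) t w
      + 1 / 2 * lam ^ 2 * riskTolerance V t w ^ 2 * dW2 (dW2 (riskTolerance V)) t w = 0 := by
  set R := riskTolerance V
  have hv := contDiffOn_dW2 hV hU
  have hv1 := contDiffOn_dW2 hv hU
  have hR : ContDiffOn ℝ ∞ (uncurry R) U := contDiffOn_riskTolerance hV hU hV2
  have hR1 := contDiffOn_dW2 hR hU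
  have hRv : ∀ s u, (s, u) ∈ U → R s u * dW2 (dW2 V) s u = -dW2 V s u :=
    fun s u hq => div_mul_cancel₀ _ (hV2 s u hq)
  have hVt : ∀ s u, (s, u) ∈ U → dT2 V s u = -(1 / 2 * lam ^ 2) * R s u * dW2 V s u := by
    intro s u hq
    have := hLV s u hq
    unfold mertonOp at this
    linear_combination this - 1 / 2 * lam ^ 2 * R s u * hRv s u hq
  have hvt : ∀ s u, (s, u) ∈ U →
      dT2 (dW2 V) s u = 1 / 2 * lam ^ 2 * (dW2 V s u - dW2 R s u * dW2 V s u) := by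
    intro s u hq
    rw [dT2_dW2_comm hV hU hq, dW2_congr hU hVt hq]
    exact ((((hasDerivAt_dW2 hR hU hq).const_mul _).mul (hasDerivAt_dW2 hv hU hq)).congr_deriv
      (by linear_combination -(1 / 2 * lam ^ 2) * hRv s u hq)).deriv
  have hv1t : dT2 (dW2 (dW2 V)) t w = 1 / 2 * lam ^ 2 * (dW2 (dW2 V) t w
      - dW2 (dW2 R) t w * dW2 V t w - dW2 R t w * dW2 (dW2 V) t w) := by
    rw [dT2_dW2_comm hv hU hp, dW2_congr hU hvt hp]
    exact ((((hasDerivAt_dW2 hv hU hp).sub ((hasDerivAt_dW2 hR1 hU hp).mul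
      (hasDerivAt_dW2 hv hU hp))).const_mul _).congr_deriv (by ring)).deriv
  have hRt : dT2 R t w * dW2 (dW2 V) t w + R t w * dT2 (dW2 (dW2 V)) t w = -dT2 (dW2 V) t w :=
    ((hasDerivAt_dT2 hR hU hp).mul (hasDerivAt_dT2 hv1 hU hp)).deriv.symm.trans
      ((dT2_congr hU hRv hp).trans (hasDerivAt_dT2 hv hU hp).neg.deriv)
  have hmul : (dT2 R t w + 1 / 2 * lam ^ 2 * R t w ^ 2 * dW2 (dW2 R) t w)
      * dW2 (dW2 V) t w = 0 := by
    linear_combination hRt - R t w * hv1t - hvt t w hp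
      + 1 / 2 * lam ^ 2 * (R t w * dW2 (dW2 R) t w + dW2 R t w - 1) * hRv t w hp
  exact (mul_eq_zero.1 hmul).resolve_right (hV2 t w hp)

theorem mertonOp_D1_eq_zero (hR : ContDiffOn ℝ ∞ (uncurry R) U)
    (hf : ContDiffOn ℝ ∞ (uncurry f) U) (hU : IsOpen U)
    (hRpde : ∀ s u, (s, u) ∈ U → dT2 R s u + 1 / 2 * lam ^ 2 * R s u ^ 2 * dW2 (dW2 R) s u = 0)
    (hLf : ∀ s u, (s, u) ∈ U → mertonOp lam R f s u = 0) (hp : (t, w) ∈ U) :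
    mertonOp lam R (D1 R f) t w = 0 := by
  rw [mertonOp_D1 hR hf hU hp, hRpde t w hp, dW2_congr hU hLf hp]
  simp [dW2]

theorem contDiffOn_iterate_D1 (hR : ContDiffOn ℝ ∞ (uncurry R) U)
    (hf : ContDiffOn ℝ ∞ (uncurry f) U) (hU : IsOpen U) (n : ℕ) :
    ContDiffOn ℝ ∞ (uncurry ((D1 R)^[n] f)) U := by
  induction n with
  | zero => exact hf
  | succ n ih => exact iterate_succ_apply' (D1 R) n f ▸ contDiffOn_D1 hR ih hU

theorem mertonOp_iterate_D1_eq_zero (hR : ContDiffOn ℝ ∞ (uncurry R) U)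
    (hf : ContDiffOn ℝ ∞ (uncurry f) U) (hU : IsOpen U)
    (hRpde : ∀ s u, (s, u) ∈ U → dT2 R s u + 1 / 2 * lam ^ 2 * R s u ^ 2 * dW2 (dW2 R) s u = 0)
    (hLf : ∀ s u, (s, u) ∈ U → mertonOp lam R f s u = 0) (n : ℕ) :
    ∀ s u, (s, u) ∈ U → mertonOp lam R ((D1 R)^[n] f) s u = 0 := by
  induction n with
  | zero => exact hLf
  | succ n ih =>
    rw [iterate_succ_apply']
    exact fun s u hq =>
      mertonOp_D1_eq_zero hR (contDiffOn_iterate_D1 hR hf hU n) hU hRpde ih hq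

theorem contDiffOn_timeMul (hφ : ContDiff ℝ ∞ φ) (hf : ContDiffOn ℝ ∞ (uncurry f) U) :
    ContDiffOn ℝ ∞ (uncurry fun t w => φ t * f t w) U :=
  (hφ.comp contDiff_fst).contDiffOn.mul hf

theorem dW2_timeMul (φ : ℝ → ℝ) (f : ℝ → ℝ → ℝ) :
    dW2 (fun t w => φ t * f t w) = fun t w => φ t * dW2 f t w := by
  funext t w
  exact deriv_const_mul_field _

theorem mertonOp_timeMul (hφ : HasDerivAt φ φ' t) (hf : ContDiffOn ℝ ∞ (uncurry f) U)
    (hU : IsOpen U) (hp : (t, w) ∈ U) :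
    mertonOp lam R (fun t w => φ t * f t w) t w = φ' * f t w + φ t * mertonOp lam R f t w := by
  have hT : dT2 (fun t w => φ t * f t w) t w = φ' * f t w + φ t * dT2 f t w :=
    (hφ.mul (hasDerivAt_dT2 hf hU hp)).deriv
  simp only [mertonOp, dW2_timeMul, hT]
  ring

theorem mertonOp_add (hf : ContDiffOn ℝ ∞ (uncurry f) U) (hg : ContDiffOn ℝ ∞ (uncurry g) U)
    (hU : IsOpen U) (hp : (t, w) ∈ U) :
    mertonOp lam R (fun t w => f t w + g t w) t w
      = mertonOp lam R f t w + mertonOp lam R g t w := by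
  have hW : ∀ s u, (s, u) ∈ U → dW2 (fun t w => f t w + g t w) s u = dW2 f s u + dW2 g s u :=
    fun s u hq => ((hasDerivAt_dW2 hf hU hq).add (hasDerivAt_dW2 hg hU hq)).deriv
  have hWW : dW2 (dW2 (fun t w => f t w + g t w)) t w
      = dW2 (dW2 f) t w + dW2 (dW2 g) t w := by
    rw [dW2_congr hU hW hp]
    exact ((hasDerivAt_dW2 (contDiffOn_dW2 hf hU) hU hp).add
      (hasDerivAt_dW2 (contDiffOn_dW2 hg hU) hU hp)).deriv
  have hT : dT2 (fun t w => f t w + g t w) t w = dT2 f t w + dT2 g t w :=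
    ((hasDerivAt_dT2 hf hU hp).add (hasDerivAt_dT2 hg hU hp)).deriv
  simp only [mertonOp, hT, hWW, hW t w hp]
  ring

end MertonOperator

section AffineInXY

variable {U : Set (ℝ × ℝ)} {α β γ R : ℝ → ℝ → ℝ} {x₀ y₀ t w : ℝ}

def affineXY (x₀ y₀ : ℝ) (α β γ : ℝ → ℝ → ℝ) : R4 :=
  fun t x y w => (x - x₀) * α t w + (y - y₀) * β t w + γ t w

theorem d4X_affineXY (x₀ y₀ : ℝ) (α β γ : ℝ → ℝ → ℝ) :
    d4X (affineXY x₀ y₀ α β γ) = affineXY x₀ y₀ 0 0 α := by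
  funext t x y w
  simp [d4X, affineXY]

theorem d4Y_affineXY (x₀ y₀ : ℝ) (α β γ : ℝ → ℝ → ℝ) :
    d4Y (affineXY x₀ y₀ α β γ) = affineXY x₀ y₀ 0 0 β := by
  funext t x y w
  simp [d4Y, affineXY]

theorem d4W_affineXY_zero_zero (x₀ y₀ : ℝ) (γ : ℝ → ℝ → ℝ) :
    d4W (affineXY x₀ y₀ 0 0 γ) = affineXY x₀ y₀ 0 0 (dW2 γ) := by
  funext t x y w
  simp [d4W, affineXY, dW2]

theorem d4T_affineXY (hα : ContDiffOn ℝ ∞ (uncurry α) U) (hβ : ContDiffOn ℝ ∞ (uncurry β) U)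
    (hγ : ContDiffOn ℝ ∞ (uncurry γ) U) (hU : IsOpen U) (hp : (t, w) ∈ U) (x y : ℝ) :
    d4T (affineXY x₀ y₀ α β γ) t x y w = affineXY x₀ y₀ (dT2 α) (dT2 β) (dT2 γ) t x y w :=
  ((((hasDerivAt_dT2 hα hU hp).const_mul _).add ((hasDerivAt_dT2 hβ hU hp).const_mul _)).add
    (hasDerivAt_dT2 hγ hU hp)).deriv

theorem d4W_affineXY (hα : ContDiffOn ℝ ∞ (uncurry α) U) (hβ : ContDiffOn ℝ ∞ (uncurry β) U)
    (hγ : ContDiffOn ℝ ∞ (uncurry γ) U) (hU : IsOpen U) (hp : (t, w) ∈ U) (x y : ℝ) :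
    d4W (affineXY x₀ y₀ α β γ) t x y w = affineXY x₀ y₀ (dW2 α) (dW2 β) (dW2 γ) t x y w :=
  ((((hasDerivAt_dW2 hα hU hp).const_mul _).add ((hasDerivAt_dW2 hβ hU hp).const_mul _)).add
    (hasDerivAt_dW2 hγ hU hp)).deriv

theorem d4W_d4W_affineXY (hα : ContDiffOn ℝ ∞ (uncurry α) U) (hβ : ContDiffOn ℝ ∞ (uncurry β) U)
    (hγ : ContDiffOn ℝ ∞ (uncurry γ) U) (hU : IsOpen U) (hp : (t, w) ∈ U) (x y : ℝ) :
    d4W (d4W (affineXY x₀ y₀ α β γ)) t x y w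
      = affineXY x₀ y₀ (dW2 (dW2 α)) (dW2 (dW2 β)) (dW2 (dW2 γ)) t x y w := by
  have h := dW2_congr (f := fun t w => d4W (affineXY x₀ y₀ α β γ) t x y w)
    (g := fun t w => affineXY x₀ y₀ (dW2 α) (dW2 β) (dW2 γ) t x y w) hU
    (fun s u hq => d4W_affineXY hα hβ hγ hU hq x y) hp
  exact h.trans (d4W_affineXY (contDiffOn_dW2 hα hU) (contDiffOn_dW2 hβ hU)
    (contDiffOn_dW2 hγ hU) hU hp x y)

def opA0 (σ0 β0 μ0 c0 ρ : ℝ) (F : R4) : R4 := fun t x y w =>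
  1 / 2 * σ0 ^ 2 * d4X (d4X F) t x y w + ρ * σ0 * β0 * d4X (d4Y F) t x y w
    + 1 / 2 * β0 ^ 2 * d4Y (d4Y F) t x y w + (μ0 - σ0 ^ 2 / 2) * d4X F t x y w
    + c0 * d4Y F t x y w

def opB0 (lam0 β0 μ0 ρ : ℝ) (R : ℝ → ℝ → ℝ) (F : R4) : R4 := fun t x y w =>
  1 / 2 * lam0 ^ 2 * R t w ^ 2 * d4W (d4W F) t x y w + lam0 ^ 2 * R t w * d4W F t x y w
    + ρ * β0 * lam0 * R t w * d4W (d4Y F) t x y w + μ0 * R t w * d4W (d4X F) t x y w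

theorem d4T_add_opA0_add_opB0_affineXY (σ0 β0 μ0 c0 ρ lam0 : ℝ)
    (hα : ContDiffOn ℝ ∞ (uncurry α) U) (hβ : ContDiffOn ℝ ∞ (uncurry β) U)
    (hγ : ContDiffOn ℝ ∞ (uncurry γ) U) (hU : IsOpen U) (hp : (t, w) ∈ U) (x y : ℝ) :
    d4T (affineXY x₀ y₀ α β γ) t x y w + opA0 σ0 β0 μ0 c0 ρ (affineXY x₀ y₀ α β γ) t x y w
      + opB0 lam0 β0 μ0 ρ R (affineXY x₀ y₀ α β γ) t x y w
      = (x - x₀) * mertonOp lam0 R α t w + (y - y₀) * mertonOp lam0 R β t w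
        + mertonOp lam0 R γ t w + (μ0 - σ0 ^ 2 / 2) * α t w + c0 * β t w
        + R t w * (ρ * β0 * lam0 * dW2 β t w + μ0 * dW2 α t w) := by
  simp only [opA0, opB0, d4X_affineXY, d4Y_affineXY, d4W_affineXY_zero_zero,
    d4T_affineXY hα hβ hγ hU hp, d4W_affineXY hα hβ hγ hU hp,
    d4W_d4W_affineXY hα hβ hγ hU hp, mertonOp, affineXY, Pi.zero_apply]
  ring

end AffineInXY

theorem firstOrderCorrection_pde {U : Set (ℝ × ℝ)} {R P Q : ℝ → ℝ → ℝ} {A : ℝ → ℝ → ℝ → ℝ}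
    {V1 : R4} {T σ0 β0 μ0 c0 lam0 lam10 lam01 ρ xbar ybar B t w : ℝ}
    (hP : ContDiffOn ℝ ∞ (uncurry P) U) (hQ : ContDiffOn ℝ ∞ (uncurry Q) U) (hU : IsOpen U)
    (hp : (t, w) ∈ U) (hQP : Q t w = R t w * dW2 P t w) (hLP : mertonOp lam0 R P t w = 0)
    (hLQ : mertonOp lam0 R Q t w = 0)
    (hA : ∀ t x y, A t x y = lam10 * (x - xbar + 1 / 2 * (T - t) * (μ0 - σ0 ^ 2 / 2))
      + lam01 * (y - ybar + 1 / 2 * (T - t) * c0))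
    (hB : B = lam10 * μ0 + lam01 * ρ * β0 * lam0)
    (hV1 : ∀ t x y w, V1 t x y w =
      (T - t) * lam0 * A t x y * P t w + 1 / 2 * (T - t) ^ 2 * lam0 * B * Q t w) (x y : ℝ) :
    d4T V1 t x y w + opA0 σ0 β0 μ0 c0 ρ V1 t x y w + opB0 lam0 β0 μ0 ρ R V1 t x y w
      + (lam0 * lam10 * (x - xbar) + lam0 * lam01 * (y - ybar)) * P t w = 0 := by
  have hτ : HasDerivAt (fun s => T - s) (-1) t := (hasDerivAt_id' t).const_sub T
  have hτ2 : HasDerivAt (fun s => (T - s) ^ 2) (-2 * (T - t)) t := by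
    simpa using hτ.fun_pow 2
  have hV1' : V1 = affineXY xbar ybar (fun t w => (T - t) * (lam0 * lam10) * P t w)
      (fun t w => (T - t) * (lam0 * lam01) * P t w)
      (fun t w => (T - t) ^ 2 * (lam0 * (lam10 * (μ0 - σ0 ^ 2 / 2) + lam01 * c0) / 2) * P t w
        + (T - t) ^ 2 * (lam0 * B / 2) * Q t w) := by
    funext t x y w
    rw [hV1, hA]
    simp only [affineXY]
    ring
  have hsP : ∀ c, ContDiffOn ℝ ∞ (uncurry fun t w => (T - t) * c * P t w) U :=
    fun c => contDiffOn_timeMul (by fun_prop) hP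
  have hsP2 : ∀ c, ContDiffOn ℝ ∞ (uncurry fun t w => (T - t) ^ 2 * c * P t w) U :=
    fun c => contDiffOn_timeMul (by fun_prop) hP
  have hsQ2 : ∀ c, ContDiffOn ℝ ∞ (uncurry fun t w => (T - t) ^ 2 * c * Q t w) U :=
    fun c => contDiffOn_timeMul (by fun_prop) hQ
  rw [hV1', d4T_add_opA0_add_opB0_affineXY σ0 β0 μ0 c0 ρ lam0 (hsP _) (hsP _) ?_ hU hp,
    mertonOp_add (hsP2 _) (hsQ2 _) hU hp,
    mertonOp_timeMul (hτ.mul_const _) hP hU hp, mertonOp_timeMul (hτ.mul_const _) hP hU hp,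
    mertonOp_timeMul (hτ2.mul_const _) hP hU hp, mertonOp_timeMul (hτ2.mul_const _) hQ hU hp,
    dW2_timeMul, dW2_timeMul, hLP, hLQ, hQP, hB]
  · ring
  · exact (hsP2 _).add (hsQ2 _)

theorem first_order_value_function_correction_general
    (T σ0 β0 μ0 c0 lam0 lam10 lam01 ρ xbar ybar : ℝ)
    (V0 : ℝ → ℝ → ℝ)
    (hV0 : ContDiffOn ℝ (⊤ : ℕ∞) (fun p : ℝ × ℝ => V0 p.1 p.2)
      (Set.Iic T ×ˢ Set.Ioi (0:ℝ)))
    (hneg : ∀ t ≤ T, ∀ w > (0:ℝ), dW2 (dW2 V0) t w < 0)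
    (hHJB : ∀ t < T, ∀ w > (0:ℝ),
      dT2 V0 t w - (1/2) * lam0^2 * (dW2 V0 t w)^2 / dW2 (dW2 V0) t w = 0)
    (R : ℝ → ℝ → ℝ)
    (hR : ∀ t w, R t w = -(dW2 V0 t w) / dW2 (dW2 V0) t w)
    (D1V0 : ℝ → ℝ → ℝ)
    (hD1V0 : ∀ t w, D1V0 t w = R t w * dW2 V0 t w)
    (D1sqV0 : ℝ → ℝ → ℝ)
    (hD1sqV0 : ∀ t w, D1sqV0 t w = R t w * dW2 D1V0 t w)
    (A : ℝ → ℝ → ℝ → ℝ)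
    (hA : ∀ t x y, A t x y =
      lam10 * ((x - xbar) + (1/2) * (T - t) * (μ0 - σ0^2/2))
      + lam01 * ((y - ybar) + (1/2) * (T - t) * c0))
    (B : ℝ) (hB : B = lam10 * μ0 + lam01 * ρ * β0 * lam0)
    (V1 : R4)
    (hV1 : ∀ t x y w, V1 t x y w =
      (T - t) * lam0 * A t x y * D1V0 t w
      + (1/2) * (T - t)^2 * lam0 * B * D1sqV0 t w) :
    (∀ t < T, ∀ (x y : ℝ), ∀ w > (0:ℝ),
      d4T V1 t x y w
        + ((1/2) * σ0^2 * d4X (d4X V1) t x y w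
            + ρ * σ0 * β0 * d4X (d4Y V1) t x y w
            + (1/2) * β0^2 * d4Y (d4Y V1) t x y w
            + (μ0 - σ0^2/2) * d4X V1 t x y w
            + c0 * d4Y V1 t x y w)
        + ((1/2) * lam0^2 * (R t w)^2 * d4W (d4W V1) t x y w
            + lam0^2 * R t w * d4W V1 t x y w
            + ρ * β0 * lam0 * R t w * d4W (d4Y V1) t x y w
            + μ0 * R t w * d4W (d4X V1) t x y w)
        + (lam0 * lam10 * (x - xbar) + lam0 * lam01 * (y - ybar)) * D1V0 t w
      = 0) ∧
    (∀ (x y : ℝ), ∀ w > (0:ℝ), V1 T x y w = 0) := by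
  refine ⟨fun t ht x y w hw => ?_, fun x y w _ => by rw [hV1]; ring⟩
  set U := Iio T ×ˢ Ioi (0 : ℝ)
  have hU : IsOpen U := isOpen_Iio.prod isOpen_Ioi
  have hp : (t, w) ∈ U := ⟨ht, hw⟩
  have hV : ContDiffOn ℝ ∞ (uncurry V0) U := hV0.mono (prod_mono Iio_subset_Iic_self le_rfl)
  have hV2 : ∀ s u, (s, u) ∈ U → dW2 (dW2 V0) s u ≠ 0 :=
    fun s u hq => (hneg s hq.1.le u hq.2).ne
  have hLV : ∀ s u, (s, u) ∈ U → mertonOp lam0 (riskTolerance V0) V0 s u = 0 :=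
    fun s u hq => (mertonOp_riskTolerance_self lam0 V0 s u).trans (hHJB s hq.1 u hq.2)
  have hRs := contDiffOn_riskTolerance hV hU hV2
  have hRpde := fun s u hq => riskTolerance_pde (t := s) (w := u) hV hU hV2 hLV hq
  obtain rfl : R = riskTolerance V0 := funext₂ hR
  obtain rfl : D1V0 = (D1 (riskTolerance V0))^[1] V0 := funext₂ hD1V0
  obtain rfl : D1sqV0 = (D1 (riskTolerance V0))^[2] V0 := funext₂ hD1sqV0
  exact firstOrderCorrection_pde (contDiffOn_iterate_D1 hRs hV hU 1)
    (contDiffOn_iterate_D1 hRs hV hU 2) hU hp (hD1sqV0 t w)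
    (mertonOp_iterate_D1_eq_zero hRs hV hU hRpde hLV 1 t w hp)
    (mertonOp_iterate_D1_eq_zero hRs hV hU hRpde hLV 2 t w hp) hA hB hV1 x y

/-- The explicit first-order value function correction
`V¹ = (T-t)λ₀ A D₁V⁰ + (1/2)(T-t)² λ₀ B D₁²V⁰` solves
`(∂_t + 𝒜₀ + ℬ₀) V¹ + (½λ²)₁ D₁V⁰ = 0` with `V¹(T,·) = 0`. -/
theorem first_order_value_function_correction
    (T σ0 β0 μ0 c0 lam0 lam10 lam01 ρ xbar ybar : ℝ)
    (hσ0 : 0 < σ0) (hρ : ρ ∈ Set.Ioo (-1 : ℝ) 1)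
    (V0 : ℝ → ℝ → ℝ)
    (hV0 : ContDiffOn ℝ (⊤ : ℕ∞) (fun p : ℝ × ℝ => V0 p.1 p.2)
      (Set.Iic T ×ˢ Set.Ioi (0:ℝ)))
    (hpos : ∀ t ≤ T, ∀ w > (0:ℝ), 0 < dW2 V0 t w)
    (hneg : ∀ t ≤ T, ∀ w > (0:ℝ), dW2 (dW2 V0) t w < 0)
    (hHJB : ∀ t < T, ∀ w > (0:ℝ),
      dT2 V0 t w - (1/2) * lam0^2 * (dW2 V0 t w)^2 / dW2 (dW2 V0) t w = 0)
    (R : ℝ → ℝ → ℝ)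
    (hR : ∀ t w, R t w = -(dW2 V0 t w) / dW2 (dW2 V0) t w)
    (D1V0 : ℝ → ℝ → ℝ)
    (hD1V0 : ∀ t w, D1V0 t w = R t w * dW2 V0 t w)
    (D1sqV0 : ℝ → ℝ → ℝ)
    (hD1sqV0 : ∀ t w, D1sqV0 t w = R t w * dW2 D1V0 t w)
    (A : ℝ → ℝ → ℝ → ℝ)
    (hA : ∀ t x y, A t x y =
      lam10 * ((x - xbar) + (1/2) * (T - t) * (μ0 - σ0^2/2))
      + lam01 * ((y - ybar) + (1/2) * (T - t) * c0))
    (B : ℝ) (hB : B = lam10 * μ0 + lam01 * ρ * β0 * lam0)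
    (V1 : R4)
    (hV1 : ∀ t x y w, V1 t x y w =
      (T - t) * lam0 * A t x y * D1V0 t w
      + (1/2) * (T - t)^2 * lam0 * B * D1sqV0 t w) :
    (∀ t < T, ∀ (x y : ℝ), ∀ w > (0:ℝ),
      d4T V1 t x y w
        + ((1/2) * σ0^2 * d4X (d4X V1) t x y w
            + ρ * σ0 * β0 * d4X (d4Y V1) t x y w
            + (1/2) * β0^2 * d4Y (d4Y V1) t x y w
            + (μ0 - σ0^2/2) * d4X V1 t x y w
            + c0 * d4Y V1 t x y w)
        + ((1/2) * lam0^2 * (R t w)^2 * d4W (d4W V1) t x y w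
            + lam0^2 * R t w * d4W V1 t x y w
            + ρ * β0 * lam0 * R t w * d4W (d4Y V1) t x y w
            + μ0 * R t w * d4W (d4X V1) t x y w)
        + (lam0 * lam10 * (x - xbar) + lam0 * lam01 * (y - ybar)) * D1V0 t w
      = 0) ∧
    (∀ (x y : ℝ), ∀ w > (0:ℝ), V1 T x y w = 0) :=
  first_order_value_function_correction_general T σ0 β0 μ0 c0 lam0 lam10 lam01 ρ xbar ybar V0 hV0
    hneg hHJB R hR D1V0 hD1V0 D1sqV0 hD1sqV0 A hA B hB V1 hV1
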